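/- Assume hypotheses (EC) and (UC). Let τ ∈ [0,T) and 0 ≤ M < M^τ. Then (OP)^{M,τ} has the bang-bang property: every optimal control u* satisfies ‖u*(t)‖ = M for a.e. t ∈ (τ,T); and (OP)^{M,τ} has a unique optimal control, in the sense that any two optimal controls u₁ and u₂ satisfy u₁(t) = u₂(t) for a.e. t ∈ (τ,T). -/

import Mathlib

open MeasureTheory Set Filter Topology

noncomputable section

variable {H : Type*} [NormedAddCommGroup H] [InnerProductSpace ℂ H] [CompleteSpace H]
  [SecondCountableTopology H]

/-- `U` is a strongly continuous one-parameter group of unitary operators on `H`,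
abstracting the Schrödinger group `e^{-iΔt}`. -/
def IsUnitaryGroup (U : ℝ → H →L[ℂ] H) : Prop :=
  U 0 = ContinuousLinearMap.id ℂ H ∧
  (∀ s t : ℝ, U (s + t) = (U s).comp (U t)) ∧
  (∀ (t : ℝ) (x : H), ‖U t x‖ = ‖x‖) ∧
  ∀ x : H, Continuous fun t : ℝ => U t x

/-- `B` is a nonzero orthogonal projection on `H`, abstracting multiplication by `χ_ω`. -/
def IsOrthProj (B : H →L[ℂ] H) : Prop :=
  B ≠ 0 ∧ B.comp B = B ∧ ∀ x y : H, (inner ℂ (B x) y : ℂ) = inner ℂ x (B y)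

/-- Membership in `L∞((a,b);H)`. -/
def MemLinfty (u : ℝ → H) (a b : ℝ) : Prop :=
  AEStronglyMeasurable u (volume : Measure ℝ) ∧
    ∃ c : ℝ, ∀ᵐ t : ℝ ∂volume, t ∈ Ioo a b → ‖u t‖ ≤ c

/-- Membership in `L∞((0,∞);H)`. -/
def MemLinftyInf (u : ℝ → H) : Prop :=
  AEStronglyMeasurable u (volume : Measure ℝ) ∧
    ∃ c : ℝ, ∀ᵐ t : ℝ ∂volume, t ∈ Ioi (0 : ℝ) → ‖u t‖ ≤ c

/-- The `L∞((a,b);H)` norm of `u`. -/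
def supNorm (u : ℝ → H) (a b : ℝ) : ℝ :=
  sInf {c : ℝ | 0 ≤ c ∧ ∀ᵐ t : ℝ ∂volume, t ∈ Ioo a b → ‖u t‖ ≤ c}

/-- `stateT U B T τ u y₀ = y(T; χ_{(τ,T)}u, y₀)`, the mild solution at time `T` of the
controlled Schrödinger equation with initial state `y₀`, the control acting on `(τ,T)`:
`y(T) = U(T)y₀ + ∫_τ^T U(T-s) B u(s) ds`.  The free state at time `t` starting from `y₀`
with control `u` active from time `0` is `stateT U B t 0 u y₀`. -/
def stateT (U : ℝ → H →L[ℂ] H) (B : H →L[ℂ] H) (T τ : ℝ) (u : ℝ → H) (y₀ : H) : H :=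
  U T y₀ + ∫ s in Ioo τ T, U (T - s) (B (u s))

/-- Hypothesis (EC): `L∞`-exact controllability with cost. -/
def EC (U : ℝ → H →L[ℂ] H) (B : H →L[ℂ] H) : Prop :=
  ∀ τ : ℝ, 0 < τ → ∃ C : ℝ, 0 < C ∧ ∀ y₀ z : H, ∃ u : ℝ → H,
    AEStronglyMeasurable u (volume : Measure ℝ) ∧
    (∀ᵐ t : ℝ ∂volume, t ∈ Ioo 0 τ → ‖u t‖ ≤ C * ‖z - U τ y₀‖) ∧
    stateT U B τ 0 u y₀ = z

/-- Hypothesis (UC): unique continuation. -/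
def UC (U : ℝ → H →L[ℂ] H) (B : H →L[ℂ] H) : Prop :=
  ∀ η : H, η ≠ 0 → volume {t : ℝ | B (U t η) = 0} = 0

/-- The admissible set `U_M` of the minimal time problem `(TOCP)_M`. -/
def UMset (U : ℝ → H →L[ℂ] H) (B : H →L[ℂ] H) (y₀ : H) (M : ℝ) : Set (ℝ → H) :=
  {u | MemLinftyInf u ∧ (∀ᵐ t : ℝ ∂volume, t ∈ Ioi (0 : ℝ) → ‖u t‖ ≤ M) ∧
    ∃ s : ℝ, 0 < s ∧ stateT U B s 0 u y₀ = 0}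

/-- The minimal time `T_M` of `(TOCP)_M`. -/
def Tmin (U : ℝ → H →L[ℂ] H) (B : H →L[ℂ] H) (y₀ : H) (M : ℝ) : ℝ :=
  sInf {s : ℝ | 0 < s ∧ ∃ u ∈ UMset U B y₀ M, stateT U B s 0 u y₀ = 0}

/-- The admissible set `V_T` of the minimal norm problem `(NOCP)_T`. -/
def VTset (U : ℝ → H →L[ℂ] H) (B : H →L[ℂ] H) (y₀ : H) (T : ℝ) : Set (ℝ → H) :=
  {v | MemLinfty v 0 T ∧ stateT U B T 0 v y₀ = 0}

/-- The minimal norm `M_T` of `(NOCP)_T`. -/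
def Mmin (U : ℝ → H →L[ℂ] H) (B : H →L[ℂ] H) (y₀ : H) (T : ℝ) : ℝ :=
  sInf ((fun v : ℝ → H => supNorm v 0 T) '' VTset U B y₀ T)

/-- Hypothesis (BB): bang-bang property of the minimal time problems. -/
def BB (U : ℝ → H →L[ℂ] H) (B : H →L[ℂ] H) : Prop :=
  ∀ y₀ : H, y₀ ≠ 0 → ∀ M : ℝ, 0 < M → ∀ u ∈ UMset U B y₀ M,
    stateT U B (Tmin U B y₀ M) 0 u y₀ = 0 →
    ∀ᵐ t : ℝ ∂volume, t ∈ Ioo 0 (Tmin U B y₀ M) → ‖u t‖ = M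

/-- Hypothesis (ET): existence of optimal controls for the minimal time problems. -/
def ET (U : ℝ → H →L[ℂ] H) (B : H →L[ℂ] H) : Prop :=
  ∀ y₀ : H, y₀ ≠ 0 → ∀ M : ℝ, 0 < M →
    ∃ u ∈ UMset U B y₀ M, stateT U B (Tmin U B y₀ M) 0 u y₀ = 0

/-- The admissible set `U_{M,τ}`. -/
def UadmSet (M τ T : ℝ) : Set (ℝ → H) :=
  {u | MemLinfty u 0 T ∧ ∀ᵐ t : ℝ ∂volume, t ∈ Ioo τ T → ‖u t‖ ≤ M}

/-- The optimal distance `r(M,τ)` of the optimal target problem `(OP)^{M,τ}`. -/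
def rOP (U : ℝ → H →L[ℂ] H) (B : H →L[ℂ] H) (y₀ z_d : H) (T M τ : ℝ) : ℝ :=
  sInf ((fun u : ℝ → H => ‖stateT U B T τ u y₀ - z_d‖) '' UadmSet M τ T)

/-- `u` is an optimal control to `(OP)^{M,τ}`. -/
def IsOptOP (U : ℝ → H →L[ℂ] H) (B : H →L[ℂ] H) (y₀ z_d : H) (T M τ : ℝ) (u : ℝ → H) :
    Prop :=
  u ∈ UadmSet M τ T ∧ ‖stateT U B T τ u y₀ - z_d‖ = rOP U B y₀ z_d T M τ

/-- `M^τ`, the minimal norm for exact steering to the target `z_d`. -/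
def Mtau (U : ℝ → H →L[ℂ] H) (B : H →L[ℂ] H) (y₀ z_d : H) (T τ : ℝ) : ℝ :=
  sInf ((fun u : ℝ → H => supNorm u τ T) ''
    {u : ℝ → H | MemLinfty u 0 T ∧ stateT U B T τ u y₀ = z_d})

/-- The admissible set `W_{τ,r}` of the optimal norm problem `(NP)^{τ,r}`. -/
def WadmSet (U : ℝ → H →L[ℂ] H) (B : H →L[ℂ] H) (y₀ z_d : H) (T τ r : ℝ) :
    Set (ℝ → H) :=
  {u | MemLinfty u 0 T ∧ ‖stateT U B T τ u y₀ - z_d‖ ≤ r}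

/-- The optimal norm `M(τ,r)` of `(NP)^{τ,r}`. -/
def MNP (U : ℝ → H →L[ℂ] H) (B : H →L[ℂ] H) (y₀ z_d : H) (T τ r : ℝ) : ℝ :=
  sInf ((fun u : ℝ → H => supNorm u τ T) '' WadmSet U B y₀ z_d T τ r)

/-- `u` is an optimal control to `(NP)^{τ,r}`. -/
def IsOptNP (U : ℝ → H →L[ℂ] H) (B : H →L[ℂ] H) (y₀ z_d : H) (T τ r : ℝ) (u : ℝ → H) :
    Prop :=
  u ∈ WadmSet U B y₀ z_d T τ r ∧ supNorm u τ T = MNP U B y₀ z_d T τ r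

/-- The admissible set `V_{M,r}` of the second type optimal time problem `(TP)^{M,r}`. -/
def VadmSet (U : ℝ → H →L[ℂ] H) (B : H →L[ℂ] H) (y₀ z_d : H) (T M r : ℝ) :
    Set (ℝ → H) :=
  {u | ∃ τ : ℝ, τ ∈ Ico (0 : ℝ) T ∧ u ∈ UadmSet M τ T ∧
    ‖stateT U B T τ u y₀ - z_d‖ ≤ r}

/-- `τ_{M,r}(u)`. -/
def tauOf (U : ℝ → H →L[ℂ] H) (B : H →L[ℂ] H) (y₀ z_d : H) (T r : ℝ) (u : ℝ → H) : ℝ :=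
  sSup {τ : ℝ | τ ∈ Ico (0 : ℝ) T ∧ ‖stateT U B T τ u y₀ - z_d‖ ≤ r}

/-- The optimal time `τ(M,r)` of `(TP)^{M,r}`. -/
def tauTP (U : ℝ → H →L[ℂ] H) (B : H →L[ℂ] H) (y₀ z_d : H) (T M r : ℝ) : ℝ :=
  sSup (tauOf U B y₀ z_d T r '' VadmSet U B y₀ z_d T M r)

/-- `u` is an optimal control to `(TP)^{M,r}`. -/
def IsOptTP (U : ℝ → H →L[ℂ] H) (B : H →L[ℂ] H) (y₀ z_d : H) (T M r : ℝ) (u : ℝ → H) :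
    Prop :=
  u ∈ VadmSet U B y₀ z_d T M r ∧
    ‖stateT U B T (tauTP U B y₀ z_d T M r) u y₀ - z_d‖ ≤ r

/-- The adjoint state `φ*(t) = U(t-T)(z_d - y(T; χ_{(τ,T)}u, y₀))`. -/
def adjState (U : ℝ → H →L[ℂ] H) (B : H →L[ℂ] H) (y₀ z_d : H) (T τ : ℝ) (u : ℝ → H)
    (t : ℝ) : H :=
  U (t - T) (z_d - stateT U B T τ u y₀)

/-!
An optimal control `u` of `(OP)^{M,τ}` realises the point of the convex reachable set nearest to
`z_d`, so the variational inequality for nearest points says that `u` maximises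
`s ↦ re ⟪B φ(s), u(s)⟫` pointwise over the ball of radius `M`, where `φ` is the adjoint state.
Because `M < M^τ`, the target is missed, so `φ ≠ 0`, and unique continuation makes `B φ(s) ≠ 0`
for a.e. `s`. The maximiser is then `M • B φ(s) / ‖B φ(s)‖`, which has norm `M`. Uniqueness follows
since the nearest point of a convex set, and hence `φ`, is unique.
-/

open scoped InnerProductSpace
open RCLike (re)

section NearestPoint

variable {E : Type*} [NormedAddCommGroup E] [InnerProductSpace ℂ E]

lemma IsMinOn.re_inner_sub_nonpos {K : Set E} (hK : Convex ℝ K) {x z : E} (hx : x ∈ K)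
    (hmin : IsMinOn (fun y => ‖y - z‖) K x) {y : E} (hy : y ∈ K) :
    re ⟪z - x, y - x⟫_ℂ ≤ 0 := by
  let := InnerProductSpace.rclikeToReal ℂ E
  have : Nonempty K := ⟨⟨x, hx⟩⟩
  have hbdd : BddBelow (range fun w : K => ‖z - w‖) := ⟨0, by rintro _ ⟨w, rfl⟩; positivity⟩
  have hinf : ‖z - x‖ = ⨅ w : K, ‖z - w‖ := by
    refine le_antisymm (le_ciInf fun w => ?_) (ciInf_le hbdd ⟨x, hx⟩)
    simpa only [norm_sub_rev z] using isMinOn_iff.1 hmin w w.2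
  exact (norm_eq_iInf_iff_real_inner_le_zero hK hx).1 hinf y hy

lemma IsMinOn.eq_of_isMinOn {K : Set E} (hK : Convex ℝ K) {x₁ x₂ z : E} (hx₁ : x₁ ∈ K)
    (hx₂ : x₂ ∈ K) (h₁ : IsMinOn (fun y => ‖y - z‖) K x₁)
    (h₂ : IsMinOn (fun y => ‖y - z‖) K x₂) : x₁ = x₂ := by
  have hsum : re ⟪z - x₁, x₂ - x₁⟫_ℂ + re ⟪z - x₂, x₁ - x₂⟫_ℂ = ‖x₂ - x₁‖ ^ 2 := by
    rw [← neg_sub x₂ x₁, inner_neg_right, map_neg, ← sub_eq_add_neg, ← map_sub,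
      ← inner_sub_left, sub_sub_sub_cancel_left, inner_self_eq_norm_sq]
  have hsq : ‖x₂ - x₁‖ ^ 2 ≤ 0 := by
    linarith [h₁.re_inner_sub_nonpos hK hx₁ hx₂, h₂.re_inner_sub_nonpos hK hx₂ hx₁]
  have hnorm : ‖x₂ - x₁‖ = 0 := pow_eq_zero_iff two_ne_zero |>.1 (le_antisymm hsq (sq_nonneg _))
  exact (sub_eq_zero.1 (norm_eq_zero.1 hnorm)).symm

/-- Equality case of Cauchy–Schwarz. -/
lemma norm_eq_and_eq_smul_of_re_inner_eq {g x : E} {M : ℝ} (hg : g ≠ 0) (hx : ‖x‖ ≤ M)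
    (h : re ⟪g, x⟫_ℂ = M * ‖g‖) : ‖x‖ = M ∧ x = (M / ‖g‖) • g := by
  let := InnerProductSpace.rclikeToReal ℂ E
  have hg' : 0 < ‖g‖ := norm_pos_iff.2 hg
  have hle : M * ‖g‖ ≤ ‖g‖ * ‖x‖ := h ▸ real_inner_le_norm g x
  have hxM : ‖x‖ = M := le_antisymm hx (by nlinarith)
  have hcs : ⟪g, x⟫_ℝ = ‖g‖ * ‖x‖ := by
    rw [hxM, mul_comm]
    exact h
  have hpar := inner_eq_norm_mul_iff_real.1 hcs
  rw [hxM] at hpar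
  refine ⟨hxM, ?_⟩
  rw [div_eq_inv_mul, mul_smul, hpar, inv_smul_smul₀ hg'.ne']

end NearestPoint

section UnitaryGroup

variable {E : Type*} [NormedAddCommGroup E] [InnerProductSpace ℂ E] {U : ℝ → E →L[ℂ] E}

lemma IsUnitaryGroup.apply_apply_neg (hU : IsUnitaryGroup U) (t : ℝ) (x : E) :
    U t (U (-t) x) = x := by
  simpa [hU.1] using (congrArg (· x) (hU.2.1 t (-t))).symm

lemma IsUnitaryGroup.inner_apply_right (hU : IsUnitaryGroup U) (t : ℝ) (x y : E) :
    ⟪x, U t y⟫_ℂ = ⟪U (-t) x, y⟫_ℂ := by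
  let Ut : E →ₗᵢ[ℂ] E := ⟨(U t).toLinearMap, hU.2.2.1 t⟩
  conv_lhs => rw [← hU.apply_apply_neg t x]
  exact Ut.inner_map_map _ _

lemma IsUnitaryGroup.continuous_uncurry (hU : IsUnitaryGroup U) :
    Continuous fun p : ℝ × E => U p.1 p.2 := by
  refine continuous_iff_continuousAt.2 fun ⟨t₀, x₀⟩ => ?_
  have hsplit : (fun p : ℝ × E => U p.1 p.2) = fun p => U p.1 (p.2 - x₀) + U p.1 x₀ := by
    funext p
    rw [← map_add, sub_add_cancel]
  have hsmall : Tendsto (fun p : ℝ × E => U p.1 (p.2 - x₀)) (𝓝 (t₀, x₀)) (𝓝 0) := by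
    refine squeeze_zero_norm (fun p => (hU.2.2.1 _ _).le) ?_
    simpa using ((continuous_snd.sub (continuous_const (y := x₀))).tendsto (t₀, x₀)).norm
  have hfree : Tendsto (fun p : ℝ × E => U p.1 x₀) (𝓝 (t₀, x₀)) (𝓝 (U t₀ x₀)) :=
    ((hU.2.2.2 x₀).tendsto t₀).comp (continuous_fst.tendsto _)
  rw [ContinuousAt, hsplit]
  simpa using hsmall.add hfree

variable {B : E →L[ℂ] E}

lemma IsUnitaryGroup.inner_duhamel (hU : IsUnitaryGroup U) (hB : (B : E →ₗ[ℂ] E).IsSymmetric)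
    (η w : E) (T s : ℝ) : ⟪η, U (T - s) (B w)⟫_ℂ = ⟪B (U (s - T) η), w⟫_ℂ := by
  rw [hU.inner_apply_right, neg_sub]
  exact (hB _ _).symm

lemma IsUnitaryGroup.integrableOn_duhamel (hU : IsUnitaryGroup U) (B : E →L[ℂ] E) {u : ℝ → E}
    (hu : AEStronglyMeasurable u volume) {a b c : ℝ} (hbd : ∀ᵐ t, t ∈ Ioo a b → ‖u t‖ ≤ c)
    (T : ℝ) : IntegrableOn (fun s => U (T - s) (B (u s))) (Ioo a b) := by
  have hmeas : AEStronglyMeasurable (fun s => U (T - s) (B (u s))) volume :=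
    hU.continuous_uncurry.comp_aestronglyMeasurable
      ((continuous_const.sub continuous_id).aestronglyMeasurable.prodMk
        (B.continuous.comp_aestronglyMeasurable hu))
  refine Integrable.mono' (g := fun _ => ‖B‖ * c) (integrableOn_const measure_Ioo_lt_top.ne)
    hmeas.restrict ?_
  filter_upwards [ae_restrict_mem measurableSet_Ioo, ae_restrict_of_ae hbd] with t ht hbd
  calc ‖U (T - t) (B (u t))‖ = ‖B (u t)‖ := hU.2.2.1 _ _
    _ ≤ ‖B‖ * ‖u t‖ := B.le_opNorm _
    _ ≤ ‖B‖ * c := by gcongr; exact hbd ht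

lemma IsUnitaryGroup.integrableOn_duhamel_of_mem_UadmSet (hU : IsUnitaryGroup U)
    (B : E →L[ℂ] E) {u : ℝ → E} {M τ T : ℝ} (hu : u ∈ UadmSet M τ T) :
    IntegrableOn (fun s => U (T - s) (B (u s))) (Ioo τ T) :=
  hU.integrableOn_duhamel B hu.1.1 hu.2 T

end UnitaryGroup

section OptimalTarget

variable {E : Type*} [NormedAddCommGroup E] [InnerProductSpace ℂ E]
  {U : ℝ → E →L[ℂ] E} {B : E →L[ℂ] E} {y₀ z_d : E} {T M τ : ℝ}

lemma convex_UadmSet : Convex ℝ (UadmSet M τ T : Set (ℝ → E)) := by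
  rintro u ⟨⟨hum, c, huc⟩, huM⟩ v ⟨⟨hvm, d, hvd⟩, hvM⟩ a b ha hb hab
  have hball {r : ℝ} {x y : E} (hx : ‖x‖ ≤ r) (hy : ‖y‖ ≤ r) : ‖a • x + b • y‖ ≤ r := by
    simpa using convex_closedBall (0 : E) r (by simpa using hx) (by simpa using hy) ha hb hab
  refine ⟨⟨(hum.const_smul a).add (hvm.const_smul b), max c d, ?_⟩, ?_⟩
  · filter_upwards [huc, hvd] with t hu hv ht
    exact hball ((hu ht).trans (le_max_left c d)) ((hv ht).trans (le_max_right c d))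
  · filter_upwards [huM, hvM] with t hu hv ht
    exact hball (hu ht) (hv ht)

lemma stateT_convexComb {u v : ℝ → E}
    (hu : IntegrableOn (fun s => U (T - s) (B (u s))) (Ioo τ T))
    (hv : IntegrableOn (fun s => U (T - s) (B (v s))) (Ioo τ T)) {a b : ℝ} (hab : a + b = 1) :
    stateT U B T τ (a • u + b • v) y₀ = a • stateT U B T τ u y₀ + b • stateT U B T τ v y₀ := by
  have hlin : ∀ s, U (T - s) (B ((a • u + b • v) s))
      = a • U (T - s) (B (u s)) + b • U (T - s) (B (v s)) := fun s => by
    simp only [Pi.add_apply, Pi.smul_apply, map_add, ContinuousLinearMap.map_smul_of_tower]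
  simp_rw [stateT, hlin]
  rw [integral_add (by exact hu.smul a) (by exact hv.smul b), integral_smul, integral_smul]
  conv_lhs => rw [← Convex.combo_self hab (U T y₀)]
  module

lemma stateT_sub_stateT {u v : ℝ → E}
    (hu : IntegrableOn (fun s => U (T - s) (B (u s))) (Ioo τ T))
    (hv : IntegrableOn (fun s => U (T - s) (B (v s))) (Ioo τ T)) :
    stateT U B T τ v y₀ - stateT U B T τ u y₀
      = ∫ s in Ioo τ T, (U (T - s) (B (v s)) - U (T - s) (B (u s))) := by
  rw [stateT, stateT, integral_sub hv hu]
  abel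

lemma IsUnitaryGroup.re_inner_duhamel_sub (hU : IsUnitaryGroup U)
    (hB : (B : E →ₗ[ℂ] E).IsSymmetric) (η : E) (u v : ℝ → E) (s : ℝ) :
    re ⟪η, U (T - s) (B (v s)) - U (T - s) (B (u s))⟫_ℂ = re ⟪B (U (s - T) η), v s - u s⟫_ℂ := by
  rw [← map_sub, ← map_sub, hU.inner_duhamel hB]

lemma IsUnitaryGroup.integrableOn_re_inner_adjoint (hU : IsUnitaryGroup U)
    (hB : (B : E →ₗ[ℂ] E).IsSymmetric) (η : E) {u v : ℝ → E}
    (hu : IntegrableOn (fun s => U (T - s) (B (u s))) (Ioo τ T))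
    (hv : IntegrableOn (fun s => U (T - s) (B (v s))) (Ioo τ T)) :
    IntegrableOn (fun s => re ⟪B (U (s - T) η), v s - u s⟫_ℂ) (Ioo τ T) :=
  ((hv.sub hu).const_inner (𝕜 := ℂ) η).re.congr
    (ae_of_all _ fun s => hU.re_inner_duhamel_sub hB η u v s)

lemma IsUnitaryGroup.re_inner_stateT_sub_stateT [CompleteSpace E] (hU : IsUnitaryGroup U)
    (hB : (B : E →ₗ[ℂ] E).IsSymmetric) (η : E) {u v : ℝ → E}
    (hu : IntegrableOn (fun s => U (T - s) (B (u s))) (Ioo τ T))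
    (hv : IntegrableOn (fun s => U (T - s) (B (v s))) (Ioo τ T)) :
    re ⟪η, stateT U B T τ v y₀ - stateT U B T τ u y₀⟫_ℂ
      = ∫ s in Ioo τ T, re ⟪B (U (s - T) η), v s - u s⟫_ℂ := by
  have hw : IntegrableOn (fun s => U (T - s) (B (v s)) - U (T - s) (B (u s))) (Ioo τ T) :=
    hv.sub hu
  rw [stateT_sub_stateT hu hv, ← integral_inner hw, ← integral_re (hw.const_inner η)]
  simp only [hU.re_inner_duhamel_sub hB]

variable (U B y₀ T M τ) in
def reachableSet : Set E := (fun u => stateT U B T τ u y₀) '' UadmSet M τ T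

lemma IsUnitaryGroup.convex_reachableSet (hU : IsUnitaryGroup U) :
    Convex ℝ (reachableSet U B y₀ T M τ) := by
  rintro _ ⟨u, hu, rfl⟩ _ ⟨v, hv, rfl⟩ a b ha hb hab
  exact ⟨a • u + b • v, convex_UadmSet hu hv ha hb hab,
    stateT_convexComb (hU.integrableOn_duhamel_of_mem_UadmSet B hu)
      (hU.integrableOn_duhamel_of_mem_UadmSet B hv) hab⟩

lemma IsOptOP.isMinOn {u : ℝ → E} (hu : IsOptOP U B y₀ z_d T M τ u) :
    IsMinOn (fun y => ‖y - z_d‖) (reachableSet U B y₀ T M τ) (stateT U B T τ u y₀) := by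
  rintro _ ⟨v, hv, rfl⟩
  change ‖stateT U B T τ u y₀ - z_d‖ ≤ ‖stateT U B T τ v y₀ - z_d‖
  rw [hu.2]
  exact csInf_le ⟨0, by rintro _ ⟨w, -, rfl⟩; positivity⟩ ⟨v, hv, rfl⟩

lemma Mtau_le_of_stateT_eq {u : ℝ → E} (hM : 0 ≤ M) (hu : u ∈ UadmSet M τ T)
    (hexact : stateT U B T τ u y₀ = z_d) : Mtau U B y₀ z_d T τ ≤ M := by
  have hnonneg : ∀ v : ℝ → E, 0 ≤ supNorm v τ T := fun v => Real.sInf_nonneg fun _ hc => hc.1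
  calc Mtau U B y₀ z_d T τ ≤ supNorm u τ T :=
        csInf_le ⟨0, by rintro _ ⟨v, -, rfl⟩; exact hnonneg v⟩ ⟨u, ⟨hu.1, hexact⟩, rfl⟩
    _ ≤ M := csInf_le ⟨0, fun _ hc => hc.1⟩ ⟨hM, hu.2⟩

lemma UC.ae_ne_zero (hUC : UC U B) {η : E} (hη : η ≠ 0) (T : ℝ) :
    ∀ᵐ s, B (U (s - T) η) ≠ 0 := by
  rw [ae_iff]
  simp only [ne_eq, not_not]
  exact (measurePreserving_sub_right volume T).quasiMeasurePreserving.preimage_null (hUC η hη)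

/-- Pontryagin's maximum principle: `u s` maximises `re ⟪B φ(s), ·⟫` on the ball of radius `M`,
where `φ` is the adjoint state; compare `u` with the maximiser `v` in the variational inequality. -/
lemma IsOptOP.re_inner_adjState_eq [CompleteSpace E] (hU : IsUnitaryGroup U)
    (hB : (B : E →ₗ[ℂ] E).IsSymmetric) (hM : 0 ≤ M) {u : ℝ → E}
    (hu : IsOptOP U B y₀ z_d T M τ u) :
    ∀ᵐ s, s ∈ Ioo τ T →
      re ⟪B (adjState U B y₀ z_d T τ u s), u s⟫_ℂ = M * ‖B (adjState U B y₀ z_d T τ u s)‖ := by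
  set g : ℝ → E := fun s => B (adjState U B y₀ z_d T τ u s)
  have hg : Continuous g := B.continuous.comp ((hU.2.2.2 _).comp (continuous_sub_right T))
  set v : ℝ → E := fun s => (M / ‖g s‖) • g s
  have hv_norm (s : ℝ) : ‖v s‖ ≤ M := by
    rcases eq_or_ne (g s) 0 with h | h
    · simp [v, h, hM]
    · rw [norm_smul, Real.norm_of_nonneg (by positivity), div_mul_cancel₀ _ (norm_ne_zero_iff.2 h)]
  have hv_inner (s : ℝ) : re ⟪g s, v s⟫_ℂ = M * ‖g s‖ := by
    rcases eq_or_ne (g s) 0 with h | h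
    · simp [v, h]
    · let := InnerProductSpace.rclikeToReal ℂ E
      rw [← real_inner_eq_re_inner ℂ, real_inner_smul_right, real_inner_self_eq_norm_sq]
      field_simp
  have hv : v ∈ UadmSet M τ T :=
    ⟨⟨((measurable_const.div hg.norm.measurable).stronglyMeasurable.smul
        hg.stronglyMeasurable).aestronglyMeasurable, M, ae_of_all _ fun s _ => hv_norm s⟩,
      ae_of_all _ fun s _ => hv_norm s⟩
  have hIu := hU.integrableOn_duhamel_of_mem_UadmSet B hu.1
  have hIv := hU.integrableOn_duhamel_of_mem_UadmSet B hv
  have hvu := hU.re_inner_stateT_sub_stateT (y₀ := y₀) hB (z_d - stateT U B T τ u y₀) hIu hIv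
  have hvar : ∫ s in Ioo τ T, re ⟪g s, v s - u s⟫_ℂ ≤ 0 :=
    hvu ▸ hu.isMinOn.re_inner_sub_nonpos hU.convex_reachableSet ⟨u, hu.1, rfl⟩ ⟨v, hv, rfl⟩
  have hnonneg : 0 ≤ᵐ[volume.restrict (Ioo τ T)] fun s => re ⟪g s, v s - u s⟫_ℂ := by
    filter_upwards [ae_restrict_mem measurableSet_Ioo, ae_restrict_of_ae hu.1.2] with s hs hus
    rw [Pi.zero_apply, inner_sub_right, map_sub, hv_inner, sub_nonneg]
    calc re ⟪g s, u s⟫_ℂ ≤ ‖g s‖ * ‖u s‖ := (RCLike.re_le_norm _).trans (norm_inner_le_norm _ _)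
      _ ≤ M * ‖g s‖ := by rw [mul_comm]; gcongr; exact hus hs
  have hzero := (integral_eq_zero_iff_of_nonneg_ae hnonneg
    (hU.integrableOn_re_inner_adjoint hB _ hIu hIv)).1
    (le_antisymm hvar (integral_nonneg_of_ae hnonneg))
  filter_upwards [(ae_restrict_iff' measurableSet_Ioo).1 hzero] with s hs hmem
  have := hs hmem
  rw [Pi.zero_apply, inner_sub_right, map_sub, hv_inner] at this
  linarith

lemma IsOptOP.norm_eq_and_eq_smul_adjState [CompleteSpace E] (hU : IsUnitaryGroup U)
    (hB : (B : E →ₗ[ℂ] E).IsSymmetric) (hUC : UC U B) (hM : 0 ≤ M)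
    (hMlt : M < Mtau U B y₀ z_d T τ) {u : ℝ → E} (hu : IsOptOP U B y₀ z_d T M τ u) :
    ∀ᵐ s, s ∈ Ioo τ T → ‖u s‖ = M ∧
      u s = (M / ‖B (adjState U B y₀ z_d T τ u s)‖) • B (adjState U B y₀ z_d T τ u s) := by
  have hmiss : z_d - stateT U B T τ u y₀ ≠ 0 := fun h =>
    hMlt.not_ge (Mtau_le_of_stateT_eq hM hu.1 (sub_eq_zero.1 h).symm)
  filter_upwards [hu.re_inner_adjState_eq hU hB hM, hUC.ae_ne_zero hmiss T, hu.1.2]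
    with s hmax hne hbd hs
  exact norm_eq_and_eq_smul_of_re_inner_eq hne (hbd hs) (hmax hs)

end OptimalTarget

theorem op_bang_bang_and_uniqueness_general
    (U : ℝ → H →L[ℂ] H) (B : H →L[ℂ] H) (hU : IsUnitaryGroup U) (hB : IsOrthProj B)
    (hUC : UC U B)
    (T : ℝ) (y₀ z_d : H)
    (τ M : ℝ) (hM : 0 ≤ M) (hMlt : M < Mtau U B y₀ z_d T τ) :
    (∀ u : ℝ → H, IsOptOP U B y₀ z_d T M τ u →
      ∀ᵐ t : ℝ ∂volume, t ∈ Ioo τ T → ‖u t‖ = M) ∧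
    (∀ u₁ u₂ : ℝ → H, IsOptOP U B y₀ z_d T M τ u₁ → IsOptOP U B y₀ z_d T M τ u₂ →
      ∀ᵐ t : ℝ ∂volume, t ∈ Ioo τ T → u₁ t = u₂ t) := by
  have hformula {u : ℝ → H} (hu : IsOptOP U B y₀ z_d T M τ u) :=
    hu.norm_eq_and_eq_smul_adjState hU hB.2.2 hUC hM hMlt
  refine ⟨fun u hu => ?_, fun u₁ u₂ hu₁ hu₂ => ?_⟩
  · filter_upwards [hformula hu] with s h hs using (h hs).1
  · have hstate : stateT U B T τ u₁ y₀ = stateT U B T τ u₂ y₀ :=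
      hu₁.isMinOn.eq_of_isMinOn hU.convex_reachableSet ⟨u₁, hu₁.1, rfl⟩ ⟨u₂, hu₂.1, rfl⟩
        hu₂.isMinOn
    filter_upwards [hformula hu₁, hformula hu₂] with s h₁ h₂ hs
    rw [(h₁ hs).2, (h₂ hs).2, adjState, adjState, hstate]

theorem op_bang_bang_and_uniqueness
    (U : ℝ → H →L[ℂ] H) (B : H →L[ℂ] H) (hU : IsUnitaryGroup U) (hB : IsOrthProj B)
    (hEC : EC U B) (hECrev : EC (fun t => U (-t)) B)
    (hUC : UC U B)
    (T : ℝ) (hT : 0 < T) (y₀ z_d : H) (hrT : 0 < ‖U T y₀ - z_d‖)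
    (τ M : ℝ) (hτ : τ ∈ Ico (0 : ℝ) T) (hM : 0 ≤ M) (hMlt : M < Mtau U B y₀ z_d T τ) :
    (∀ u : ℝ → H, IsOptOP U B y₀ z_d T M τ u →
      ∀ᵐ t : ℝ ∂volume, t ∈ Ioo τ T → ‖u t‖ = M) ∧
    (∀ u₁ u₂ : ℝ → H, IsOptOP U B y₀ z_d T M τ u₁ → IsOptOP U B y₀ z_d T M τ u₂ →
      ∀ᵐ t : ℝ ∂volume, t ∈ Ioo τ T → u₁ t = u₂ t) :=
  op_bang_bang_and_uniqueness_general U B hU hB hUC T y₀ z_d τ M hM hMlt
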